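/- arXiv:2207.11788 — 8 statements merged into one kernel-verified Lean document; each statement's English description precedes it below -/
import Mathlib

section
/- Let Q be a nonempty compact convex subset of [0,1]^d ⊆ ℝ^d. Then the squared Chebyshev radius of Q is bounded by the relaxed objective: inf_{x̂ ∈ ℝ^d} sup_{x ∈ Q} ‖x − x̂‖² ≤ sup_{x ∈ Q} (1_dᵀ x − ‖x‖²). -/
/-!
Let `x⋆` maximise the concave function `f x = ⟪1, x⟫ - ‖x‖²` over `Q`. Since `Q` is convex, the
first-order condition `⟪1 - 2 x⋆, x - x⋆⟫ ≤ 0` holds for every `x ∈ Q`, and expanding squares gives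
`‖x - x⋆‖² + f x = f x⋆ + ⟪1 - 2 x⋆, x - x⋆⟫ ≤ f x⋆`. On the unit cube `f ≥ 0`, so the centre `x⋆`
has squared radius at most `f x⋆ ≤ sup_Q f`.
-/

open scoped RealInnerProductSpace

section QuadraticObjective

variable {E : Type*} [NormedAddCommGroup E] [InnerProductSpace ℝ E] {Q : Set E} {c x xs : E}

theorem inner_sub_two_smul_sub_nonpos_of_isMaxOn (hQ : Convex ℝ Q)
    (hmax : IsMaxOn (fun y => ⟪c, y⟫ - ‖y‖ ^ 2) Q xs) (hxs : xs ∈ Q) (hx : x ∈ Q) :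
    ⟪c - (2 : ℝ) • xs, x - xs⟫ ≤ 0 := by
  have hderiv : HasFDerivAt (fun y => ⟪c, y⟫ - ‖y‖ ^ 2)
      (innerSL ℝ c - 2 • innerSL ℝ xs) xs :=
    (innerSL ℝ c).hasFDerivAt.sub (hasStrictFDerivAt_norm_sq xs).hasFDerivAt
  have := hmax.localize.hasFDerivWithinAt_nonpos hderiv.hasFDerivWithinAt
    (sub_mem_posTangentConeAt_of_segment_subset (hQ.segment_subset hxs hx))
  simpa [inner_sub_left, real_inner_smul_left] using this

theorem norm_sub_sq_add_le_of_isMaxOn (hQ : Convex ℝ Q)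
    (hmax : IsMaxOn (fun y => ⟪c, y⟫ - ‖y‖ ^ 2) Q xs) (hxs : xs ∈ Q) (hx : x ∈ Q) :
    ‖x - xs‖ ^ 2 + (⟪c, x⟫ - ‖x‖ ^ 2) ≤ ⟪c, xs⟫ - ‖xs‖ ^ 2 := by
  have hfoc := inner_sub_two_smul_sub_nonpos_of_isMaxOn hQ hmax hxs hx
  rw [inner_sub_left, inner_sub_right, inner_sub_right, real_inner_smul_left,
    real_inner_smul_left, real_inner_self_eq_norm_sq] at hfoc
  rw [norm_sub_sq_real, real_inner_comm]
  linarith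

end QuadraticObjective

theorem EuclideanSpace.norm_sq_le_sum_of_mem_Icc {ι : Type*} [Fintype ι] {x : EuclideanSpace ℝ ι}
    (hx : ∀ i, x i ∈ Set.Icc (0 : ℝ) 1) : ‖x‖ ^ 2 ≤ ∑ i, x i := by
  rw [EuclideanSpace.real_norm_sq_eq]
  gcongr with i
  nlinarith [(hx i).1, (hx i).2]

theorem EuclideanSpace.inner_toLp_one {ι : Type*} [Fintype ι] (x : EuclideanSpace ℝ ι) :
    ⟪WithLp.toLp 2 (1 : ι → ℝ), x⟫ = ∑ i, x i := by
  simp [PiLp.inner_apply]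

theorem sInf_sSup_norm_sub_sq_le {E : Type*} [SeminormedAddCommGroup E] (Q : Set E) (z : E) :
    sInf {r : ℝ | ∃ xh : E, r = sSup ((fun x => ‖x - xh‖ ^ 2) '' Q)} ≤
      sSup ((fun x => ‖x - z‖ ^ 2) '' Q) := by
  refine csInf_le ⟨0, ?_⟩ ⟨z, rfl⟩
  rintro _ ⟨y, rfl⟩
  exact Real.sSup_nonneg <| by rintro _ ⟨x, -, rfl⟩; positivity

/-- For a nonempty compact convex `Q ⊆ [0,1]^d`, the squared Chebyshev radius of `Q`
is bounded above by the relaxed objective `sup_{x ∈ Q} (1ᵀx − ‖x‖²)`. -/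
theorem chebyshev_radius_sq_le_relaxed
    {d : ℕ} (Q : Set (EuclideanSpace ℝ (Fin d)))
    (hne : Q.Nonempty) (hcomp : IsCompact Q) (hconv : Convex ℝ Q)
    (hsub : ∀ x ∈ Q, ∀ i, x i ∈ Set.Icc (0 : ℝ) 1) :
    sInf {r : ℝ | ∃ xh : EuclideanSpace ℝ (Fin d),
        r = sSup ((fun x => ‖x - xh‖ ^ 2) '' Q)} ≤
      sSup ((fun x : EuclideanSpace ℝ (Fin d) => (∑ i, x i) - ‖x‖ ^ 2) '' Q) := by
  simp_rw [← EuclideanSpace.inner_toLp_one]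
  set f : EuclideanSpace ℝ (Fin d) → ℝ := fun x => ⟪WithLp.toLp 2 1, x⟫ - ‖x‖ ^ 2
  obtain ⟨xs, hxs, hmax⟩ := hcomp.exists_isMaxOn hne (f := f) (by fun_prop)
  have hbound : ∀ x ∈ Q, ‖x - xs‖ ^ 2 ≤ f xs := fun x hx => by
    have hcube := EuclideanSpace.norm_sq_le_sum_of_mem_Icc (hsub x hx)
    rw [← EuclideanSpace.inner_toLp_one] at hcube
    linarith [norm_sub_sq_add_le_of_isMaxOn hconv hmax hxs hx]
  calc _ ≤ sSup ((fun x => ‖x - xs‖ ^ 2) '' Q) := sInf_sSup_norm_sub_sq_le Q xs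
    _ ≤ f xs := csSup_le (hne.image _) <| by rintro _ ⟨x, hx, rfl⟩; exact hbound x hx
    _ ≤ sSup (f '' Q) := le_csSup (hcomp.image (by fun_prop)).bddAbove ⟨xs, hxs, rfl⟩
end

section
/- Let A ∈ ℝ^{m×d}, let B ∈ ℝ^{d×m} be a Moore–Penrose pseudoinverse of A, let b ∈ ℝ^m, and suppose the feasible solution set S_F = {x ∈ [0,1]^d : Ax = b} is nonempty. Define the half* estimate h := Bb + (1/2)(I_d − BA)·1_d, and let p ∈ S_F be the (unique) point of the closed convex set S_F closest to h in Euclidean norm (the RCC2 estimate). Then for every x ∈ S_F one has ‖x − p‖² ≤ ‖x − h‖². Consequently, for any random vector X satisfying X ∈ S_F almost surely, E[‖X − p‖²] ≤ E[‖X − h‖²], i.e., MSE(X̂_RCC2) ≤ MSE(X̂_half*). -/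
/-!
The nearest point `p` of a convex set to `h` satisfies the variational inequality
`⟪h - p, x - p⟫ ≤ 0` for every `x` in the set, hence
`‖x - h‖² = ‖x - p‖² - 2⟪x - p, h - p⟫ + ‖h - p‖² ≥ ‖x - p‖²`. Integrating this gives the
comparison of mean square errors; the integrands are bounded because `X` lies in `[0,1]^d`.
-/

open MeasureTheory Matrix
open scoped InnerProductSpace

theorem norm_sub_le_norm_sub_of_forall_norm_sub_le {F : Type*} [NormedAddCommGroup F]
    [InnerProductSpace ℝ F] {K : Set F} (hK : Convex ℝ K) {u v : F} (hv : v ∈ K)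
    (hmin : ∀ w ∈ K, ‖u - v‖ ≤ ‖u - w‖) {w : F} (hw : w ∈ K) : ‖w - v‖ ≤ ‖w - u‖ := by
  have : Nonempty K := ⟨⟨v, hv⟩⟩
  have hinf : ‖u - v‖ = ⨅ w : K, ‖u - w‖ :=
    le_antisymm (le_ciInf fun w => hmin w w.2)
      (ciInf_le ⟨0, Set.forall_mem_range.2 fun _ => norm_nonneg _⟩ (⟨v, hv⟩ : K))
  have hobtuse : ⟪u - v, w - v⟫_ℝ ≤ 0 := (norm_eq_iInf_iff_real_inner_le_zero hK hv).1 hinf w hw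
  have hsq : ‖w - u‖ ^ 2 = ‖w - v‖ ^ 2 - 2 * ⟪w - v, u - v⟫_ℝ + ‖u - v‖ ^ 2 := by
    rw [← norm_sub_sq_real, sub_sub_sub_cancel_right]
  rw [real_inner_comm] at hobtuse
  exact le_of_sq_le_sq (by nlinarith [sq_nonneg ‖u - v‖]) (norm_nonneg _)

theorem sum_sub_sq_eq_norm_toLp_sub_sq {ι : Type*} [Fintype ι] (x y : ι → ℝ) :
    ∑ i, (x i - y i) ^ 2 = ‖WithLp.toLp 2 x - WithLp.toLp 2 y‖ ^ 2 := by
  simp [EuclideanSpace.real_norm_sq_eq]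

theorem sum_sub_sq_le_of_forall_sum_sub_sq_le {ι : Type*} [Fintype ι] {K : Set (ι → ℝ)}
    (hK : Convex ℝ K) {h p : ι → ℝ} (hp : p ∈ K)
    (hclosest : ∀ y ∈ K, ∑ i, (h i - p i) ^ 2 ≤ ∑ i, (h i - y i) ^ 2) {x : ι → ℝ} (hx : x ∈ K) :
    ∑ i, (x i - p i) ^ 2 ≤ ∑ i, (x i - h i) ^ 2 := by
  simp only [sum_sub_sq_eq_norm_toLp_sub_sq] at hclosest ⊢
  refine pow_le_pow_left₀ (norm_nonneg _) ?_ 2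
  refine norm_sub_le_norm_sub_of_forall_norm_sub_le
    (hK.linear_preimage (WithLp.linearEquiv 2 ℝ (ι → ℝ)).toLinearMap) hp (fun w hw => ?_) hx
  exact le_of_sq_le_sq (hclosest w hw) (norm_nonneg _)

def feasibleSet {m n : Type*} [Fintype n] (A : Matrix m n ℝ) (b : m → ℝ) : Set (n → ℝ) :=
  {x | (∀ i, x i ∈ Set.Icc (0 : ℝ) 1) ∧ A *ᵥ x = b}

theorem convex_feasibleSet {m n : Type*} [Fintype n] (A : Matrix m n ℝ) (b : m → ℝ) :
    Convex ℝ (feasibleSet A b) := by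
  have hbox : Convex ℝ (Set.univ.pi fun _ : n => Set.Icc (0 : ℝ) 1) :=
    convex_pi fun _ _ => convex_Icc 0 1
  convert hbox.inter ((convex_singleton b).linear_preimage A.mulVecLin) using 1
  ext x
  simp only [feasibleSet, Set.mem_ofPred_eq, Set.mem_inter_iff, Set.mem_univ_pi, Set.mem_preimage,
    Matrix.mulVecLin_apply, Set.mem_singleton_iff]

theorem integrable_sum_sub_sq_of_abs_le {Ω ι : Type*} [Fintype ι] [MeasurableSpace Ω]
    {μ : Measure Ω} [IsFiniteMeasure μ] {X : Ω → ι → ℝ} (hX : Measurable X) {C : ℝ}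
    (hXC : ∀ᵐ ω ∂μ, ∀ i, |X ω i| ≤ C) (v : ι → ℝ) :
    Integrable (fun ω => ∑ i, (X ω i - v i) ^ 2) μ := by
  refine .of_bound (by fun_prop) (∑ i, (C + |v i|) ^ 2) ?_
  filter_upwards [hXC] with ω hω
  rw [Real.norm_of_nonneg (by positivity)]
  refine Finset.sum_le_sum fun i _ => ?_
  rw [← sq_abs]
  refine pow_le_pow_left₀ (abs_nonneg _) ?_ 2
  linarith [abs_sub (X ω i) (v i), hω i]

theorem rcc2_outperforms_halfstar_general
    {m d : ℕ} (A : Matrix (Fin m) (Fin d) ℝ)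
    (b : Fin m → ℝ)
    (SF : Set (Fin d → ℝ))
    (hSF : SF = {x : Fin d → ℝ | (∀ i, x i ∈ Set.Icc (0 : ℝ) 1) ∧ A *ᵥ x = b})
    (h : Fin d → ℝ)
    (p : Fin d → ℝ) (hpmem : p ∈ SF)
    (hclosest : ∀ y ∈ SF, ∑ i, (h i - p i) ^ 2 ≤ ∑ i, (h i - y i) ^ 2)
    {Ω : Type*} [MeasureSpace Ω] [IsProbabilityMeasure (volume : Measure Ω)]
    (X : Ω → Fin d → ℝ) (hXmeas : Measurable X) (hXmem : ∀ᵐ ω, X ω ∈ SF) :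
    (∀ x ∈ SF, ∑ i, (x i - p i) ^ 2 ≤ ∑ i, (x i - h i) ^ 2) ∧
      (∫ ω, ∑ i, (X ω i - p i) ^ 2) ≤ ∫ ω, ∑ i, (X ω i - h i) ^ 2 := by
  have hSFconvex : Convex ℝ SF := hSF ▸ convex_feasibleSet A b
  have hpointwise : ∀ x ∈ SF, ∑ i, (x i - p i) ^ 2 ≤ ∑ i, (x i - h i) ^ 2 :=
    fun x hx => sum_sub_sq_le_of_forall_sum_sub_sq_le hSFconvex hpmem hclosest hx
  have hXbdd : ∀ᵐ ω, ∀ i, |X ω i| ≤ 1 := by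
    filter_upwards [hXmem] with ω hω i
    obtain ⟨h0, h1⟩ := (hSF ▸ hω).1 i
    exact abs_le.2 ⟨by linarith, h1⟩
  refine ⟨hpointwise, integral_mono_ae (integrable_sum_sub_sq_of_abs_le hXmeas hXbdd p)
    (integrable_sum_sub_sq_of_abs_le hXmeas hXbdd h) ?_⟩
  filter_upwards [hXmem] with ω hω using hpointwise _ hω

/-- RCC2 (the projection of the half* estimate onto the feasible set `S_F`)
outperforms the half* estimate pointwise on `S_F`, hence also in mean square error
for any random vector `X ∈ S_F` almost surely. -/
theorem rcc2_outperforms_halfstar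
    {m d : ℕ} (A : Matrix (Fin m) (Fin d) ℝ) (B : Matrix (Fin d) (Fin m) ℝ)
    (h1 : A * B * A = A) (h2 : B * A * B = B)
    (h3 : (A * B)ᵀ = A * B) (h4 : (B * A)ᵀ = B * A)
    (b : Fin m → ℝ)
    (SF : Set (Fin d → ℝ))
    (hSF : SF = {x : Fin d → ℝ | (∀ i, x i ∈ Set.Icc (0 : ℝ) 1) ∧ A *ᵥ x = b})
    (hne : SF.Nonempty)
    (h : Fin d → ℝ)
    (hh : h = B *ᵥ b + (2 : ℝ)⁻¹ • ((1 - B * A) *ᵥ (fun _ : Fin d => (1 : ℝ))))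
    (p : Fin d → ℝ) (hpmem : p ∈ SF)
    (hclosest : ∀ y ∈ SF, ∑ i, (h i - p i) ^ 2 ≤ ∑ i, (h i - y i) ^ 2)
    {Ω : Type*} [MeasureSpace Ω] [IsProbabilityMeasure (volume : Measure Ω)]
    (X : Ω → Fin d → ℝ) (hXmeas : Measurable X) (hXmem : ∀ᵐ ω, X ω ∈ SF) :
    (∀ x ∈ SF, ∑ i, (x i - p i) ^ 2 ≤ ∑ i, (x i - h i) ^ 2) ∧
      (∫ ω, ∑ i, (X ω i - p i) ^ 2) ≤ ∫ ω, ∑ i, (X ω i - h i) ^ 2 :=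
  rcc2_outperforms_halfstar_general A b SF hSF h p hpmem hclosest X hXmeas hXmem
end

section
/- Let A ∈ ℝ^{m×d}, let B ∈ ℝ^{d×m} be a Moore–Penrose pseudoinverse of A, let b ∈ ℝ^m, and let h := Bb + (1/2)(I_d − BA)·1_d. Then for every x ∈ ℝ^d with Ax = b, the vectors x − h and h − (1/2)·1_d are orthogonal, and consequently ‖x − (1/2)·1_d‖² = ‖x − h‖² + ‖h − (1/2)·1_d‖² ≥ ‖x − h‖². Hence for any random vector X with AX = b almost surely, E[‖X − h‖²] ≤ E[‖X − (1/2)·1_d‖²], i.e., MSE(X̂_half*) ≤ MSE(X̂_half). -/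
open MeasureTheory Matrix

/-!
With `B` a pseudoinverse of `A`, `BA` is the orthogonal projector onto the row space of `A`, so
`p = Bb + (I − BA)v` is the orthogonal projection of `v` onto the affine solution set `{x | Ax = b}`:
`p − v = B(b − Av)` lies in the row space, while `x − p` lies in the kernel of `A` for every
solution `x`. Pythagoras then gives `‖x − v‖² = ‖x − p‖² + ‖p − v‖²` pointwise, and integrating
this almost-sure identity (the constant `‖p − v‖²` has finite integral) compares the two MSEs.
Here `v = (1/2)·1` and `p = h`.
-/

section SolutionProj

variable {R : Type*} [CommRing R] {m n : Type*} [Fintype m] [Fintype n] [DecidableEq n]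
  (A : Matrix m n R) (B : Matrix n m R) (b : m → R)

def solutionProj (v : n → R) : n → R :=
  B *ᵥ b + (1 - B * A) *ᵥ v

variable {A B b}

theorem mul_mulVec_solutionProj (hBAB : B * A * B = B) (v : n → R) :
    (B * A) *ᵥ solutionProj A B b v = B *ᵥ b := by
  have hBA : B * A * (B * A) = B * A := by rw [← Matrix.mul_assoc, hBAB]
  rw [solutionProj, mulVec_add, mulVec_mulVec, mulVec_mulVec, hBAB, mul_sub, mul_one, hBA,
    sub_self, zero_mulVec, add_zero]

theorem solutionProj_sub (v : n → R) : solutionProj A B b v - v = B *ᵥ (b - A *ᵥ v) := by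
  rw [solutionProj, sub_mulVec, one_mulVec, mulVec_sub, mulVec_mulVec]
  abel

theorem dotProduct_sub_solutionProj_eq_zero (hBAB : B * A * B = B) (hBA : (B * A)ᵀ = B * A)
    {x : n → R} (hx : A *ᵥ x = b) (v : n → R) :
    (x - solutionProj A B b v) ⬝ᵥ (solutionProj A B b v - v) = 0 := by
  have hker : (B * A) *ᵥ (x - solutionProj A B b v) = 0 := by
    rw [mulVec_sub, mul_mulVec_solutionProj hBAB, ← mulVec_mulVec, hx, sub_self]
  have hrange : solutionProj A B b v - v = (B * A) *ᵥ (B *ᵥ (b - A *ᵥ v)) := by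
    rw [solutionProj_sub, mulVec_mulVec, hBAB]
  rw [hrange, dotProduct_mulVec, ← mulVec_transpose, hBA, hker, zero_dotProduct]

end SolutionProj

theorem sum_sq_sub_eq_add_of_sum_mul_eq_zero {R : Type*} [CommRing R] {n : Type*} [Fintype n]
    {x p v : n → R} (horth : ∑ i, (x i - p i) * (p i - v i) = 0) :
    ∑ i, (x i - v i) ^ 2 = ∑ i, (x i - p i) ^ 2 + ∑ i, (p i - v i) ^ 2 := by
  have hsplit : ∀ i, (x i - v i) ^ 2
      = (x i - p i) ^ 2 + (p i - v i) ^ 2 + 2 * ((x i - p i) * (p i - v i)) := fun i => by ring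
  simp only [hsplit, Finset.sum_add_distrib, ← Finset.mul_sum, horth, mul_zero, add_zero]

theorem integral_le_of_ae_eq_add_const {Ω : Type*} [MeasurableSpace Ω] {μ : Measure Ω}
    [IsFiniteMeasure μ] {f g : Ω → ℝ} {c : ℝ} (hc : 0 ≤ c) (hfg : ∀ᵐ ω ∂μ, g ω = f ω + c) :
    ∫ ω, f ω ∂μ ≤ ∫ ω, g ω ∂μ := by
  rw [integral_congr_ae hfg]
  by_cases hf : Integrable f μ
  · rw [integral_add hf (integrable_const c), integral_const]
    exact le_add_of_nonneg_right (smul_nonneg ENNReal.toReal_nonneg hc)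
  · have hfc : ¬Integrable (fun ω => f ω + c) μ := fun hfc =>
      hf ((hfc.sub (integrable_const c)).congr (.of_forall fun ω => by simp))
    rw [integral_undef hf, integral_undef hfc]

theorem halfstar_outperforms_half_general
    {m d : ℕ} (A : Matrix (Fin m) (Fin d) ℝ) (B : Matrix (Fin d) (Fin m) ℝ)
    (h2 : B * A * B = B)
    (h4 : (B * A)ᵀ = B * A)
    (b : Fin m → ℝ)
    (h : Fin d → ℝ)
    (hh : h = B *ᵥ b + (2 : ℝ)⁻¹ • ((1 - B * A) *ᵥ (fun _ : Fin d => (1 : ℝ))))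
    {Ω : Type*} [MeasureSpace Ω] [IsProbabilityMeasure (volume : Measure Ω)]
    (X : Ω → Fin d → ℝ) (hX : ∀ᵐ ω, A *ᵥ X ω = b) :
    (∀ x : Fin d → ℝ, A *ᵥ x = b →
        (∑ i, (x i - h i) * (h i - 1 / 2) = 0) ∧
        (∑ i, (x i - 1 / 2) ^ 2 = ∑ i, (x i - h i) ^ 2 + ∑ i, (h i - 1 / 2) ^ 2) ∧
        (∑ i, (x i - h i) ^ 2 ≤ ∑ i, (x i - 1 / 2) ^ 2)) ∧
      (∫ ω, ∑ i, (X ω i - h i) ^ 2) ≤ ∫ ω, ∑ i, (X ω i - 1 / 2) ^ 2 := by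
  have hproj : h = solutionProj A B b (fun _ => 1 / 2) := by
    rw [hh, solutionProj, ← mulVec_smul]
    congr 2
    ext
    simp
  have horth : ∀ x, A *ᵥ x = b → ∑ i, (x i - h i) * (h i - 1 / 2) = 0 := fun x hx => by
    subst hproj
    exact dotProduct_sub_solutionProj_eq_zero h2 h4 hx _
  have hpyth : ∀ x, A *ᵥ x = b →
      ∑ i, (x i - 1 / 2) ^ 2 = ∑ i, (x i - h i) ^ 2 + ∑ i, (h i - 1 / 2) ^ 2 :=
    fun x hx => sum_sq_sub_eq_add_of_sum_mul_eq_zero (v := fun _ => 1 / 2) (horth x hx)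
  have hgap : 0 ≤ ∑ i, (h i - 1 / 2) ^ 2 := Finset.sum_nonneg fun i _ => sq_nonneg _
  refine ⟨fun x hx => ⟨horth x hx, hpyth x hx, ?_⟩,
    integral_le_of_ae_eq_add_const hgap (hX.mono fun ω => hpyth (X ω))⟩
  rw [hpyth x hx]
  exact le_add_of_nonneg_right hgap

/-- For `h = Bb + (1/2)(I − BA)·1` and any solution `x` of `Ax = b`, the vectors
`x − h` and `h − (1/2)·1` are orthogonal, giving the Pythagorean identity and
`‖x − h‖² ≤ ‖x − (1/2)·1‖²`; hence MSE(half*) ≤ MSE(half) for `X` with `AX = b` a.s. -/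
theorem halfstar_outperforms_half
    {m d : ℕ} (A : Matrix (Fin m) (Fin d) ℝ) (B : Matrix (Fin d) (Fin m) ℝ)
    (h1 : A * B * A = A) (h2 : B * A * B = B)
    (h3 : (A * B)ᵀ = A * B) (h4 : (B * A)ᵀ = B * A)
    (b : Fin m → ℝ)
    (h : Fin d → ℝ)
    (hh : h = B *ᵥ b + (2 : ℝ)⁻¹ • ((1 - B * A) *ᵥ (fun _ : Fin d => (1 : ℝ))))
    {Ω : Type*} [MeasureSpace Ω] [IsProbabilityMeasure (volume : Measure Ω)]
    (X : Ω → Fin d → ℝ) (hXmeas : Measurable X) (hX : ∀ᵐ ω, A *ᵥ X ω = b) :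
    (∀ x : Fin d → ℝ, A *ᵥ x = b →
        (∑ i, (x i - h i) * (h i - 1 / 2) = 0) ∧
        (∑ i, (x i - 1 / 2) ^ 2 = ∑ i, (x i - h i) ^ 2 + ∑ i, (h i - 1 / 2) ^ 2) ∧
        (∑ i, (x i - h i) ^ 2 ≤ ∑ i, (x i - 1 / 2) ^ 2)) ∧
      (∫ ω, ∑ i, (X ω i - h i) ^ 2) ≤ ∫ ω, ∑ i, (X ω i - 1 / 2) ^ 2 :=
  halfstar_outperforms_half_general A B h2 h4 b h hh X hX
end

section
/- Let A ∈ ℝ^{m×d} and let B ∈ ℝ^{d×m} be a Moore–Penrose pseudoinverse of A. Let X be a random vector in ℝ^d with E[‖X‖²] < ∞, and define K₀ := E[XXᵀ] and K_{½1} := E[(X − (1/2)·1_d)(X − (1/2)·1_d)ᵀ]. Then E[‖X − BAX‖²] = Tr((I_d − BA) K₀) and E[‖X − (BAX + (1/2)(I_d − BA)·1_d)‖²] = Tr((I_d − BA) K_{½1}). (These are the exact mean square errors of the least-squares attack X̂_LS = B(AX) and the half* attack X̂_half* = B(AX) + (1/2)(I − BA)·1_d, respectively, up to the factor 1/d.)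 -/
open MeasureTheory Matrix

/-!
Both attacks leave the residual `(I − BA)(X − z)`, with `z = 0` for least squares and
`z = ½·1` for half*. The Penrose identities `BAB = B` and `(BA)ᵀ = BA` make `P = I − BA` a
symmetric idempotent, so `‖P y‖² = yᵀ P y = Tr(P y yᵀ)`, and taking expectations gives
`Tr(P K_z)`.
-/

namespace Matrix

variable {n : Type*} [Fintype n]

theorem sum_sq_mulVec_of_isIdempotentElem_of_transpose_eq {P : Matrix n n ℝ}
    (hP : IsIdempotentElem P) (hPt : Pᵀ = P) (v : n → ℝ) :
    ∑ i, (P *ᵥ v) i ^ 2 = ∑ i, ∑ j, P i j * (v i * v j) := by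
  calc ∑ i, (P *ᵥ v) i ^ 2 = (v ᵥ* Pᵀ) ⬝ᵥ (P *ᵥ v) := by
        simp only [vecMul_transpose, dotProduct, sq]
    _ = v ⬝ᵥ P *ᵥ v := by rw [hPt, ← dotProduct_mulVec, mulVec_mulVec, hP.eq]
    _ = ∑ i, ∑ j, P i j * (v i * v j) := by
        simp only [dotProduct, mulVec, Finset.mul_sum]
        exact Finset.sum_congr rfl fun i _ => Finset.sum_congr rfl fun j _ => by ring

end Matrix

section SecondMoment

variable {Ω n : Type*} [Fintype n] [MeasurableSpace Ω] {μ : Measure Ω}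

theorem integral_sum_mul_mul_eq_trace (P : Matrix n n ℝ) {Y : Ω → n → ℝ}
    (hY : ∀ i, MemLp (fun ω => Y ω i) 2 μ) :
    ∫ ω, ∑ i, ∑ j, P i j * (Y ω i * Y ω j) ∂μ =
      trace (P * of fun i j => ∫ ω, Y ω i * Y ω j ∂μ) := by
  have hint : ∀ i j, Integrable (fun ω => P i j * (Y ω i * Y ω j)) μ := fun i j =>
    ((hY i).integrable_mul (hY j)).const_mul _
  simp only [trace, diag, mul_apply, of_apply]
  rw [integral_finsetSum _ fun i _ => integrable_finsetSum _ fun j _ => hint i j]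
  refine Finset.sum_congr rfl fun i _ => ?_
  rw [integral_finsetSum _ fun j _ => hint i j]
  refine Finset.sum_congr rfl fun j _ => ?_
  simp only [integral_const_mul, mul_comm (Y _ i)]

theorem integral_sum_sq_mulVec_eq_trace {P : Matrix n n ℝ} (hP : IsIdempotentElem P)
    (hPt : Pᵀ = P) {Y : Ω → n → ℝ} (hY : ∀ i, MemLp (fun ω => Y ω i) 2 μ) :
    ∫ ω, ∑ i, (P *ᵥ Y ω) i ^ 2 ∂μ = trace (P * of fun i j => ∫ ω, Y ω i * Y ω j ∂μ) := by
  simp only [sum_sq_mulVec_of_isIdempotentElem_of_transpose_eq hP hPt]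
  exact integral_sum_mul_mul_eq_trace P hY

end SecondMoment

theorem mse_ls_and_halfstar_closed_form_general
    {m d : ℕ} (A : Matrix (Fin m) (Fin d) ℝ) (B : Matrix (Fin d) (Fin m) ℝ)
    (h2 : B * A * B = B)
    (h4 : (B * A)ᵀ = B * A)
    {Ω : Type*} [MeasureSpace Ω] [IsProbabilityMeasure (volume : Measure Ω)]
    (X : Ω → Fin d → ℝ)
    (hL2 : ∀ i, MemLp (fun ω => X ω i) 2)
    (K₀ Khalf : Matrix (Fin d) (Fin d) ℝ)
    (hK₀ : K₀ = Matrix.of fun i j => ∫ ω, X ω i * X ω j)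
    (hKhalf : Khalf = Matrix.of fun i j => ∫ ω, (X ω i - 1 / 2) * (X ω j - 1 / 2)) :
    (∫ ω, ∑ i, (X ω i - ((B * A) *ᵥ X ω) i) ^ 2) =
        Matrix.trace ((1 - B * A) * K₀) ∧
      (∫ ω, ∑ i, (X ω i -
            (((B * A) *ᵥ X ω + (2 : ℝ)⁻¹ • ((1 - B * A) *ᵥ (fun _ : Fin d => (1 : ℝ)))
              : Fin d → ℝ)) i) ^ 2) =
        Matrix.trace ((1 - B * A) * Khalf) := by
  have hP : IsIdempotentElem (1 - B * A) :=
    IsIdempotentElem.one_sub (by rw [IsIdempotentElem, ← Matrix.mul_assoc, h2])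
  have hPt : (1 - B * A)ᵀ = 1 - B * A := by rw [transpose_sub, transpose_one, h4]
  have residual_ls : ∀ ω i, X ω i - ((B * A) *ᵥ X ω) i = ((1 - B * A) *ᵥ X ω) i := by
    simp [sub_mulVec]
  have residual_half : ∀ ω i, X ω i -
      (((B * A) *ᵥ X ω + (2 : ℝ)⁻¹ • ((1 - B * A) *ᵥ (fun _ : Fin d => (1 : ℝ)))
        : Fin d → ℝ)) i = ((1 - B * A) *ᵥ fun j => X ω j - 1 / 2) i := by
    intro ω i
    have : (fun j => X ω j - 1 / 2) = X ω - (2 : ℝ)⁻¹ • fun _ => 1 := by ext; simp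
    rw [this, mulVec_sub, mulVec_smul]
    simp only [sub_mulVec, one_mulVec, Pi.add_apply, Pi.sub_apply]
    ring
  simp only [residual_ls, residual_half, hK₀, hKhalf]
  exact ⟨integral_sum_sq_mulVec_eq_trace hP hPt hL2,
    integral_sum_sq_mulVec_eq_trace hP hPt fun i => (hL2 i).sub (memLp_const _)⟩

/-- Exact mean square errors (up to the factor `1/d`) of the least-squares attack
`X̂_LS = BAX` and the half* attack `X̂_half* = BAX + (1/2)(I − BA)·1`:
`E‖X − BAX‖² = Tr((I − BA)K₀)` and
`E‖X − (BAX + (1/2)(I−BA)1)‖² = Tr((I − BA)K_{½1})`. -/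
theorem mse_ls_and_halfstar_closed_form
    {m d : ℕ} (A : Matrix (Fin m) (Fin d) ℝ) (B : Matrix (Fin d) (Fin m) ℝ)
    (h1 : A * B * A = A) (h2 : B * A * B = B)
    (h3 : (A * B)ᵀ = A * B) (h4 : (B * A)ᵀ = B * A)
    {Ω : Type*} [MeasureSpace Ω] [IsProbabilityMeasure (volume : Measure Ω)]
    (X : Ω → Fin d → ℝ) (hXmeas : Measurable X)
    (hL2 : ∀ i, MemLp (fun ω => X ω i) 2)
    (K₀ Khalf : Matrix (Fin d) (Fin d) ℝ)
    (hK₀ : K₀ = Matrix.of fun i j => ∫ ω, X ω i * X ω j)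
    (hKhalf : Khalf = Matrix.of fun i j => ∫ ω, (X ω i - 1 / 2) * (X ω j - 1 / 2)) :
    (∫ ω, ∑ i, (X ω i - ((B * A) *ᵥ X ω) i) ^ 2) =
        Matrix.trace ((1 - B * A) * K₀) ∧
      (∫ ω, ∑ i, (X ω i -
            (((B * A) *ᵥ X ω + (2 : ℝ)⁻¹ • ((1 - B * A) *ᵥ (fun _ : Fin d => (1 : ℝ)))
              : Fin d → ℝ)) i) ^ 2) =
        Matrix.trace ((1 - B * A) * Khalf) :=
  mse_ls_and_halfstar_closed_form_general A B h2 h4 X hL2 K₀ Khalf hK₀ hKhalf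
end

section
/- Let A ∈ ℝ^{m×d}, let B ∈ ℝ^{d×m} be a Moore–Penrose pseudoinverse of A, and let X be a random vector in ℝ^d with E[‖X‖²] < ∞ and mean μ = E[X]. For z ∈ ℝ^d put K_z := E[(X − z)(X − z)ᵀ]. Then for every z ∈ ℝ^d, Tr((I_d − BA) K_z) − Tr((I_d − BA) K_μ) = (z − μ)ᵀ (I_d − BA) (z − μ) ≥ 0; in particular Tr((I_d − BA) K₀) ≥ Tr((I_d − BA) K_μ) and Tr((I_d − BA) K_{½1}) ≥ Tr((I_d − BA) K_μ), i.e., the mean square errors of the LS and half* attacks are lower-bounded by Tr((I − BA) K_μ)/d. -/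
open MeasureTheory Matrix

/-!
Since `B A B = B` and `B A` is symmetric, `P = I − B A` is an orthogonal projection, hence
positive semidefinite. Expanding around the mean, `K_z = K_μ + (z − μ)(z − μ)ᵀ`, so
`Tr(P K_z) − Tr(P K_μ) = Tr(P (z − μ)(z − μ)ᵀ) = (z − μ)ᵀ P (z − μ) ≥ 0`.
-/

theorem Matrix.isStarProjection_mul_of_mul_mul_eq {m n R : Type*} [Fintype m] [Fintype n]
    [Semiring R] [StarRing R] {A : Matrix m n R} {B : Matrix n m R}
    (hBAB : B * A * B = B) (hBA : (B * A)ᴴ = B * A) : IsStarProjection (B * A) :=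
  ⟨by rw [IsIdempotentElem, ← Matrix.mul_assoc, hBAB], hBA⟩

open scoped MatrixOrder ComplexOrder in
theorem IsStarProjection.dotProduct_mulVec_nonneg {n 𝕜 : Type*} [Fintype n]
    [DecidableEq n] [RCLike 𝕜] {P : Matrix n n 𝕜} (hP : IsStarProjection P) (v : n → 𝕜) :
    0 ≤ star v ⬝ᵥ (P *ᵥ v) :=
  hP.nonneg.posSemidef.dotProduct_mulVec_nonneg v

theorem Matrix.trace_mul_vecMulVec {n R : Type*} [Fintype n] [CommSemiring R]
    (P : Matrix n n R) (v : n → R) : trace (P * vecMulVec v v) = v ⬝ᵥ (P *ᵥ v) := by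
  rw [mul_vecMulVec, trace_vecMulVec, dotProduct_comm]

section SecondMoment

open ProbabilityTheory

variable {Ω ι : Type*} [MeasurableSpace Ω] {μ : Measure Ω} [IsProbabilityMeasure μ]

theorem integral_sub_mul_sub {f g : Ω → ℝ} (hf : MemLp f 2 μ) (hg : MemLp g 2 μ) (a b : ℝ) :
    ∫ ω, (f ω - a) * (g ω - b) ∂μ = cov[f, g; μ] + (μ[f] - a) * (μ[g] - b) := by
  have hf₁ := hf.integrable one_le_two
  have hg₁ := hg.integrable one_le_two
  have hcov : cov[fun ω ↦ f ω - a, fun ω ↦ g ω - b; μ] = cov[f, g; μ] := by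
    simp_rw [sub_eq_add_neg]
    rw [covariance_add_const_left hf₁, covariance_add_const_right hg₁]
  rw [← hcov, covariance_eq_sub (X := fun ω ↦ f ω - a) (Y := fun ω ↦ g ω - b)
    (hf.sub (memLp_const a)) (hg.sub (memLp_const b)),
    integral_sub hf₁ (integrable_const a), integral_sub hg₁ (integrable_const b)]
  simp

variable (μ) in
noncomputable def secondMomentMatrix (X : Ω → ι → ℝ) (z : ι → ℝ) : Matrix ι ι ℝ :=
  of fun i j ↦ ∫ ω, (X ω i - z i) * (X ω j - z j) ∂μ

theorem secondMomentMatrix_eq_add_vecMulVec {X : Ω → ι → ℝ}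
    (hX : ∀ i, MemLp (fun ω ↦ X ω i) 2 μ) (z : ι → ℝ) :
    secondMomentMatrix μ X z =
      secondMomentMatrix μ X (fun i ↦ ∫ ω, X ω i ∂μ) +
        vecMulVec (z - fun i ↦ ∫ ω, X ω i ∂μ) (z - fun i ↦ ∫ ω, X ω i ∂μ) := by
  ext i j
  simp only [secondMomentMatrix, Matrix.add_apply, of_apply, vecMulVec_apply, Pi.sub_apply]
  rw [integral_sub_mul_sub (hX i) (hX j), integral_sub_mul_sub (hX i) (hX j)]
  ring

end SecondMoment

theorem mse_lower_bound_covariance_general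
    {m d : ℕ} (A : Matrix (Fin m) (Fin d) ℝ) (B : Matrix (Fin d) (Fin m) ℝ)
    (h2 : B * A * B = B)
    (h4 : (B * A)ᵀ = B * A)
    {Ω : Type*} [MeasureSpace Ω] [IsProbabilityMeasure (volume : Measure Ω)]
    (X : Ω → Fin d → ℝ)
    (hL2 : ∀ i, MemLp (fun ω => X ω i) 2)
    (mu : Fin d → ℝ) (hmu : mu = fun i => ∫ ω, X ω i)
    (K : (Fin d → ℝ) → Matrix (Fin d) (Fin d) ℝ)
    (hKdef : K = fun z => Matrix.of fun i j => ∫ ω, (X ω i - z i) * (X ω j - z j)) :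
    (∀ z : Fin d → ℝ,
        Matrix.trace ((1 - B * A) * K z) - Matrix.trace ((1 - B * A) * K mu) =
            (z - mu) ⬝ᵥ ((1 - B * A) *ᵥ (z - mu)) ∧
          0 ≤ (z - mu) ⬝ᵥ ((1 - B * A) *ᵥ (z - mu))) ∧
      Matrix.trace ((1 - B * A) * K mu) ≤ Matrix.trace ((1 - B * A) * K 0) ∧
      Matrix.trace ((1 - B * A) * K mu) ≤
        Matrix.trace ((1 - B * A) * K (fun _ => 1 / 2)) := by
  have hK : ∀ z, K z = K mu + vecMulVec (z - mu) (z - mu) := by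
    subst hKdef hmu
    exact secondMomentMatrix_eq_add_vecMulVec hL2
  have hP : IsStarProjection (1 - B * A) :=
    (isStarProjection_mul_of_mul_mul_eq h2
      ((conjTranspose_eq_transpose_of_trivial _).trans h4)).one_sub
  have hgap : ∀ z, trace ((1 - B * A) * K z) - trace ((1 - B * A) * K mu) =
      (z - mu) ⬝ᵥ ((1 - B * A) *ᵥ (z - mu)) := fun z ↦ by
    rw [hK z, Matrix.mul_add, trace_add, trace_mul_vecMulVec, add_sub_cancel_left]
  have hnonneg : ∀ z, 0 ≤ (z - mu) ⬝ᵥ ((1 - B * A) *ᵥ (z - mu)) := fun z ↦ by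
    simpa using hP.dotProduct_mulVec_nonneg (z - mu)
  refine ⟨fun z ↦ ⟨hgap z, hnonneg z⟩, ?_, ?_⟩
  · linarith [hgap 0, hnonneg 0]
  · linarith [hgap (fun _ ↦ 1 / 2), hnonneg (fun _ ↦ 1 / 2)]

/-- For every `z`, `Tr((I − BA)K_z) − Tr((I − BA)K_μ) = (z − μ)ᵀ(I − BA)(z − μ) ≥ 0`;
in particular the traces for `K₀` (`z = 0`) and `K_{½1}` (`z = ½·1`) are lower-bounded
by `Tr((I − BA)K_μ)`, i.e. the MSEs of the LS and half* attacks are lower-bounded by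
`Tr((I − BA)K_μ)/d`. -/
theorem mse_lower_bound_covariance
    {m d : ℕ} (A : Matrix (Fin m) (Fin d) ℝ) (B : Matrix (Fin d) (Fin m) ℝ)
    (h1 : A * B * A = A) (h2 : B * A * B = B)
    (h3 : (A * B)ᵀ = A * B) (h4 : (B * A)ᵀ = B * A)
    {Ω : Type*} [MeasureSpace Ω] [IsProbabilityMeasure (volume : Measure Ω)]
    (X : Ω → Fin d → ℝ) (hXmeas : Measurable X)
    (hL2 : ∀ i, MemLp (fun ω => X ω i) 2)
    (mu : Fin d → ℝ) (hmu : mu = fun i => ∫ ω, X ω i)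
    (K : (Fin d → ℝ) → Matrix (Fin d) (Fin d) ℝ)
    (hKdef : K = fun z => Matrix.of fun i j => ∫ ω, (X ω i - z i) * (X ω j - z j)) :
    (∀ z : Fin d → ℝ,
        Matrix.trace ((1 - B * A) * K z) - Matrix.trace ((1 - B * A) * K mu) =
            (z - mu) ⬝ᵥ ((1 - B * A) *ᵥ (z - mu)) ∧
          0 ≤ (z - mu) ⬝ᵥ ((1 - B * A) *ᵥ (z - mu))) ∧
      Matrix.trace ((1 - B * A) * K mu) ≤ Matrix.trace ((1 - B * A) * K 0) ∧
      Matrix.trace ((1 - B * A) * K mu) ≤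
        Matrix.trace ((1 - B * A) * K (fun _ => 1 / 2)) :=
  mse_lower_bound_covariance_general A B h2 h4 X hL2 mu hmu K hKdef
end

section
/- Let ω ∈ ℝ with ω ≠ 0, let N ≥ 1, and let x₁, …, x_N ∈ [0,1], not all zero. Define v_i := ω x_i for i ∈ [N], let M ∈ [N] be an index maximizing |v_i| (so v_M ≠ 0), and define the estimates x̂_i := v_i / v_M for i ∈ [N]. Then the empirical mean square error satisfies (1/N) ∑_{i=1}^{N} (x_i − x̂_i)² ≤ (x_M − 1)². -/
/-!
Since `ω` cancels, `x̂_i = x_i / x_M`, so the error is `x_i - x̂_i = (x_i / x_M) (x_M - 1)`,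
and maximality of `|x_M|` gives `|x_i / x_M| ≤ 1`. Every summand is thus at most `(x_M - 1)²`,
and so is their mean.
-/

open Finset

lemma abs_le_abs_of_abs_mul_le_abs_mul {K : Type*} [Field K] [LinearOrder K] [IsStrictOrderedRing K]
    {c a b : K} (hc : c ≠ 0) (h : |c * a| ≤ |c * b|) : |a| ≤ |b| := by
  rw [abs_mul, abs_mul] at h
  exact le_of_mul_le_mul_left h (abs_pos.mpr hc)

lemma sq_sub_div_le_sq_sub_one {K : Type*} [Field K] [LinearOrder K] [IsStrictOrderedRing K]
    {a b : K} (h : |a| ≤ |b|) : (a - a / b) ^ 2 ≤ (b - 1) ^ 2 := by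
  rcases eq_or_ne b 0 with rfl | hb
  · simp_all
  have hfactor : a - a / b = a / b * (b - 1) := by field_simp
  rw [hfactor, mul_pow]
  refine mul_le_of_le_one_left (sq_nonneg _) ?_
  rw [div_pow, div_le_one (by positivity)]
  exact sq_le_sq.mpr h

lemma one_div_card_mul_sum_le {ι K : Type*} [Fintype ι] [Nonempty ι] [Field K] [LinearOrder K]
    [IsStrictOrderedRing K] {f : ι → K} {c : K} (h : ∀ i, f i ≤ c) :
    1 / (Fintype.card ι : K) * ∑ i, f i ≤ c := by
  rw [one_div_mul_eq_div, ← Fintype.expect_eq_sum_div_card]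
  exact expect_le univ_nonempty fun i _ => h i

theorem blackbox_zero_bias_mse_bound_general
    {N : ℕ} (w : ℝ) (hw : w ≠ 0)
    (x : Fin N → ℝ) (hnz : ∃ i, x i ≠ 0)
    (M : Fin N) (hM : ∀ i, |w * x i| ≤ |w * x M|) :
    w * x M ≠ 0 ∧
      (1 / (N : ℝ)) * ∑ i, (x i - (w * x i) / (w * x M)) ^ 2 ≤ (x M - 1) ^ 2 := by
  obtain ⟨j, hj⟩ := hnz
  have habs : ∀ i, |x i| ≤ |x M| := fun i => abs_le_abs_of_abs_mul_le_abs_mul hw (hM i)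
  have hxM : x M ≠ 0 := fun h => hj (abs_nonpos_iff.mp (by simpa [h] using habs j))
  refine ⟨mul_ne_zero hw hxM, ?_⟩
  have : Nonempty (Fin N) := ⟨j⟩
  simp_rw [mul_div_mul_left _ _ hw]
  simpa using one_div_card_mul_sum_le fun i => sq_sub_div_le_sq_sub_one (habs i)

/-- Black-box attack with one feature and zero bias: observing `v_i = ω x_i` with
`ω ≠ 0` and `x` not identically zero, taking `M` maximizing `|v_i|` and estimating
`x̂_i = v_i / v_M`, the empirical MSE satisfies
`(1/N) ∑ (x_i − x̂_i)² ≤ (x_M − 1)²` (and `v_M ≠ 0`). -/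
theorem blackbox_zero_bias_mse_bound
    {N : ℕ} (hN : 1 ≤ N) (w : ℝ) (hw : w ≠ 0)
    (x : Fin N → ℝ) (hx : ∀ i, x i ∈ Set.Icc (0 : ℝ) 1) (hnz : ∃ i, x i ≠ 0)
    (M : Fin N) (hM : ∀ i, |w * x i| ≤ |w * x M|) :
    w * x M ≠ 0 ∧
      (1 / (N : ℝ)) * ∑ i, (x i - (w * x i) / (w * x M)) ^ 2 ≤ (x M - 1) ^ 2 :=
  blackbox_zero_bias_mse_bound_general w hw x hnz M hM
end

section
/- Let (X_i)_{i≥1} be i.i.d. random variables with values in [0,1] whose common CDF F satisfies 0 < F(α) < 1 for all α ∈ (0,1), and let ω ≠ 0. For each N, let V_i = ω X_i, let M be an index in [N] maximizing |V_i|, and define X̂_i := V_i / V_M if V_M ≠ 0 and X̂_i := 0 otherwise. Then for every ε > 0, lim_{N→∞} P( (1/N) ∑_{i=1}^{N} (X_i − X̂_i)² ≥ ε ) = 0; that is, the empirical mean square error of the adversary converges in probability to 0 as the number of predictions N grows. -/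
open MeasureTheory ProbabilityTheory Filter

/-!
If `m` is the largest sample, the `i`-th squared error is `(x_i - x_i/m)² = (x_i/m)²(1 - m)² ≤ (1 - m)²`,
so an empirical MSE of at least `ε` forces every sample below `β = 1 - √ε`. By independence this
event has probability `F(β)^N`, which tends to `0` because `F(β) < 1`.
-/

lemma sq_sub_div_le_sq_one_sub {x m : ℝ} (hx : 0 ≤ x) (hxm : x ≤ m) :
    (x - x / m) ^ 2 ≤ (1 - m) ^ 2 := by
  have hdiv : x / m ≤ 1 := div_le_one_of_le₀ hxm (hx.trans hxm)
  calc (x - x / m) ^ 2 = (x / m) ^ 2 * (1 - m) ^ 2 := by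
        rcases eq_or_ne m 0 with rfl | hm
        · simp [le_antisymm hxm hx]
        · field_simp; ring
    _ ≤ 1 * (1 - m) ^ 2 := by
        gcongr
        exact pow_le_one₀ (div_nonneg hx (hx.trans hxm)) hdiv
    _ = (1 - m) ^ 2 := one_mul _

lemma mean_le_of_forall_le {ι : Type*} (s : Finset ι) (f : ι → ℝ) {c : ℝ} (hc : 0 ≤ c)
    (hf : ∀ i ∈ s, f i ≤ c) : 1 / (s.card : ℝ) * ∑ i ∈ s, f i ≤ c := by
  rcases s.eq_empty_or_nonempty with rfl | hs
  · simpa using hc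
  have hsum : ∑ i ∈ s, f i ≤ s.card * c := by
    simpa using Finset.sum_le_card_nsmul s f c hf
  rw [one_div_mul_eq_div, div_le_iff₀ (by exact_mod_cast hs.card_pos)]
  linarith

lemma le_one_sub_sqrt_of_le_mean_sq_sub_div {ι : Type*} {s : Finset ι} {x : ι → ℝ} {m ε : ℝ}
    (hx : ∀ i ∈ s, 0 ≤ x i) (hxm : ∀ i ∈ s, x i ≤ m) (hm : m ≤ 1)
    (hε : ε ≤ 1 / (s.card : ℝ) * ∑ i ∈ s, (x i - x i / m) ^ 2) :
    ∀ i ∈ s, x i ≤ 1 - √ε := by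
  have hεm : ε ≤ (1 - m) ^ 2 := hε.trans <| mean_le_of_forall_le s _ (sq_nonneg _)
    fun i hi => sq_sub_div_le_sq_one_sub (hx i hi) (hxm i hi)
  have hsqrt : √ε ≤ 1 - m :=
    (Real.sqrt_le_sqrt hεm).trans_eq (Real.sqrt_sq (sub_nonneg.mpr hm))
  intro i hi
  linarith [hxm i hi]

lemma ProbabilityTheory.iIndepFun.measure_biInter_preimage_eq_pow {Ω ι β : Type*} [MeasurableSpace Ω]
    [MeasurableSpace β] {μ : Measure Ω} {X : ι → Ω → β} (hindep : iIndepFun X μ) {j : ι}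
    (hident : ∀ i, IdentDistrib (X i) (X j) μ μ) {A : Set β} (hA : MeasurableSet A)
    (s : Finset ι) : μ (⋂ i ∈ s, X i ⁻¹' A) = μ (X j ⁻¹' A) ^ s.card := by
  rw [hindep.measure_inter_preimage_eq_mul s (sets := fun _ => A) fun _ _ => hA,
    Finset.prod_congr rfl fun i _ => (hident i).measure_mem_eq hA, Finset.prod_const]

theorem blackbox_zero_bias_mse_tendsto_zero_general
    {Ω : Type*} [MeasureSpace Ω] [IsProbabilityMeasure (volume : Measure Ω)]
    (X : ℕ → Ω → ℝ)
    (hindep : iIndepFun X)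
    (hident : ∀ i, IdentDistrib (X i) (X 1))
    (hrange : ∀ i ω, X i ω ∈ Set.Icc (0 : ℝ) 1)
    (hF : ∀ α ∈ Set.Ioo (0 : ℝ) 1,
      0 < volume {ω | X 1 ω ≤ α} ∧ volume {ω | X 1 ω ≤ α} < 1)
    (w : ℝ) (hw : w ≠ 0)
    (M : ℕ → Ω → ℕ)
    (hMmax : ∀ N ω, ∀ i ∈ Finset.Icc 1 N, |w * X i ω| ≤ |w * X (M N ω) ω|) :
    ∀ ε > (0 : ℝ),
      Tendsto
        (fun N : ℕ => volume {ω | ε ≤ (1 / (N : ℝ)) *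
          ∑ i ∈ Finset.Icc 1 N, (X i ω - (w * X i ω) / (w * X (M N ω) ω)) ^ 2})
        atTop (nhds 0) := by
  intro ε hε
  set β : ℝ := max (1 - √ε) (1 / 2)
  have hβ : β ∈ Set.Ioo (0 : ℝ) 1 :=
    ⟨by positivity, max_lt (by linarith [Real.sqrt_pos.mpr hε]) (by norm_num)⟩
  have hsub : ∀ N : ℕ, {ω | ε ≤ (1 / (N : ℝ)) *
      ∑ i ∈ Finset.Icc 1 N, (X i ω - (w * X i ω) / (w * X (M N ω) ω)) ^ 2} ⊆
      ⋂ i ∈ Finset.Icc 1 N, X i ⁻¹' Set.Iic β := by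
    intro N ω hω
    have hle : ∀ i ∈ Finset.Icc 1 N, X i ω ≤ X (M N ω) ω := fun i hi => by
      simpa [abs_mul, abs_of_nonneg (hrange _ ω).1, hw] using hMmax N ω i hi
    have hcard : ((Finset.Icc 1 N).card : ℝ) = N := by simp
    simp only [mul_div_mul_left _ _ hw, ← hcard] at hω
    simp only [Set.mem_iInter, Set.mem_preimage, Set.mem_Iic]
    exact fun i hi => (le_one_sub_sqrt_of_le_mean_sq_sub_div (fun i _ => (hrange i ω).1) hle
      (hrange _ ω).2 hω i hi).trans (le_max_left _ _)
  refine tendsto_of_tendsto_of_tendsto_of_le_of_le tendsto_const_nhds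
    (ENNReal.tendsto_pow_atTop_nhds_zero_of_lt_one (hF β hβ).2) (fun _ => zero_le) fun N => ?_
  calc _ ≤ volume (⋂ i ∈ Finset.Icc 1 N, X i ⁻¹' Set.Iic β) := measure_mono (hsub N)
    _ = volume {ω | X 1 ω ≤ β} ^ N := by
      rw [hindep.measure_biInter_preimage_eq_pow hident measurableSet_Iic, Nat.card_Icc,
        Nat.add_sub_cancel]
      rfl

/-- Black-box attack with one feature and zero bias, i.i.d. samples: the adversary
observes `V_i = ω X_i` (`ω ≠ 0` unknown), picks `M` maximizing `|V_i|` over `i ∈ [N]`,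
and estimates `X̂_i = V_i / V_M` (`X̂_i = 0` when `V_M = 0`, as given by division by
zero). Then the empirical MSE converges in probability to `0` as `N → ∞`. -/
theorem blackbox_zero_bias_mse_tendsto_zero
    {Ω : Type*} [MeasureSpace Ω] [IsProbabilityMeasure (volume : Measure Ω)]
    (X : ℕ → Ω → ℝ) (hmeas : ∀ i, Measurable (X i))
    (hindep : iIndepFun X)
    (hident : ∀ i, IdentDistrib (X i) (X 1))
    (hrange : ∀ i ω, X i ω ∈ Set.Icc (0 : ℝ) 1)
    (hF : ∀ α ∈ Set.Ioo (0 : ℝ) 1,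
      0 < volume {ω | X 1 ω ≤ α} ∧ volume {ω | X 1 ω ≤ α} < 1)
    (w : ℝ) (hw : w ≠ 0)
    (M : ℕ → Ω → ℕ)
    (hMmem : ∀ N ω, 1 ≤ N → M N ω ∈ Finset.Icc 1 N)
    (hMmax : ∀ N ω, ∀ i ∈ Finset.Icc 1 N, |w * X i ω| ≤ |w * X (M N ω) ω|) :
    ∀ ε > (0 : ℝ),
      Tendsto
        (fun N : ℕ => volume {ω | ε ≤ (1 / (N : ℝ)) *
          ∑ i ∈ Finset.Icc 1 N, (X i ω - (w * X i ω) / (w * X (M N ω) ω)) ^ 2})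
        atTop (nhds 0) :=
  blackbox_zero_bias_mse_tendsto_zero_general X hindep hident hrange hF w hw M hMmax
end

section
/- Let A ∈ ℝ^{m×d}, let B ∈ ℝ^{d×m} be a Moore–Penrose pseudoinverse of A, let H ∈ ℝ^{d×d} be orthonormal (HᵀH = I_d), and let X be a random vector in ℝ^d with E[‖X‖²] < ∞ and correlation matrix K₀ = E[XXᵀ]. Then E[‖X − H B A X‖²] = Tr((I_d + BA) K₀) − 2 Tr(H B A K₀). (This is the MSE of the least-squares attack after the privacy-preserving linear transform by H, since the attack then yields X̂ = HBAX.) -/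
/-!
Writing `C = H(BA)`, the residual is `X − CX = (1 − C)X`, so the squared error is the quadratic form
of `(1 − C)ᵀ(1 − C) = 1 − C − Cᵀ + CᵀC` at `X`, whose expectation is `Tr((1 − C)ᵀ(1 − C) K₀)`.
Since `K₀` is symmetric, `Tr(Cᵀ K₀) = Tr(C K₀)`, and orthonormality of `H` together with symmetry
and idempotence of `BA` give `CᵀC = BA`.
-/

open MeasureTheory Matrix

namespace Matrix

variable {ι R : Type*} [Fintype ι]

theorem mul_mul_self_eq_of_mul_mul_eq {m n : Type*} [Fintype m] [Fintype n] [NonUnitalSemiring R]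
    {A : Matrix m n R} {B : Matrix n m R} (h : A * B * A = A) : B * A * (B * A) = B * A := by
  rw [Matrix.mul_assoc, ← Matrix.mul_assoc A, h]

theorem transpose_mul_self_mul_eq [DecidableEq ι] [CommSemiring R] {H P : Matrix ι ι R}
    (hH : Hᵀ * H = 1) (hP : Pᵀ = P) (hPP : P * P = P) : (H * P)ᵀ * (H * P) = P := by
  rw [transpose_mul, Matrix.mul_assoc, ← Matrix.mul_assoc Hᵀ, hH, Matrix.one_mul, hP, hPP]

theorem sum_sq_sub_mulVec [DecidableEq ι] [CommRing R] (C : Matrix ι ι R) (x : ι → R) :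
    ∑ i, (x i - (C *ᵥ x) i) ^ 2 = x ⬝ᵥ (((1 - C)ᵀ * (1 - C)) *ᵥ x) := by
  have hres : x - C *ᵥ x = (1 - C) *ᵥ x := by rw [sub_mulVec, one_mulVec]
  rw [← mulVec_mulVec, dotProduct_mulVec, vecMul_transpose, ← hres]
  simp only [dotProduct, Pi.sub_apply, sq]

theorem trace_transpose_mul_of_transpose_eq [CommSemiring R] {C K : Matrix ι ι R}
    (hK : Kᵀ = K) :
    trace (Cᵀ * K) = trace (C * K) := by
  rw [← trace_transpose, transpose_mul, transpose_transpose, hK, trace_mul_comm]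

end Matrix

namespace MeasureTheory

variable {ι Ω : Type*} [MeasurableSpace Ω] (μ : Measure Ω)

noncomputable def secondMoment (X : Ω → ι → ℝ) : Matrix ι ι ℝ :=
  Matrix.of fun i j => ∫ ω, X ω i * X ω j ∂μ

theorem secondMoment_transpose (X : Ω → ι → ℝ) : (secondMoment μ X)ᵀ = secondMoment μ X := by
  ext i j
  simp only [secondMoment, transpose_apply, of_apply, mul_comm]

theorem integral_dotProduct_mulVec [Fintype ι] {X : Ω → ι → ℝ}
    (hX : ∀ i, MemLp (fun ω => X ω i) 2 μ) (M : Matrix ι ι ℝ) :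
    ∫ ω, X ω ⬝ᵥ (M *ᵥ X ω) ∂μ = trace (M * secondMoment μ X) := by
  have hint : ∀ i j, Integrable (fun ω => M i j * (X ω j * X ω i)) μ := fun i j =>
    ((hX j).integrable_mul (hX i)).const_mul _
  have hexpand : ∀ ω, X ω ⬝ᵥ (M *ᵥ X ω) = ∑ i, ∑ j, M i j * (X ω j * X ω i) := fun ω => by
    simp only [dotProduct, mulVec, Finset.mul_sum]
    exact Finset.sum_congr rfl fun i _ => Finset.sum_congr rfl fun j _ => by ring
  simp only [hexpand, trace, diag, mul_apply, secondMoment, of_apply]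
  rw [integral_finsetSum _ fun i _ => integrable_finsetSum _ fun j _ => hint i j]
  refine Finset.sum_congr rfl fun i _ => ?_
  rw [integral_finsetSum _ fun j _ => hint i j]
  simp only [integral_const_mul]

theorem integral_sum_sq_sub_mulVec [Fintype ι] [DecidableEq ι] {X : Ω → ι → ℝ}
    (hX : ∀ i, MemLp (fun ω => X ω i) 2 μ) (C : Matrix ι ι ℝ) :
    ∫ ω, ∑ i, (X ω i - (C *ᵥ X ω) i) ^ 2 ∂μ =
      trace ((1 + Cᵀ * C) * secondMoment μ X) - 2 * trace (C * secondMoment μ X) := by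
  have hCt := trace_transpose_mul_of_transpose_eq (C := C) (secondMoment_transpose μ X)
  simp only [sum_sq_sub_mulVec, integral_dotProduct_mulVec μ hX]
  rw [transpose_sub, transpose_one]
  simp only [sub_mul, mul_sub, add_mul, Matrix.one_mul, Matrix.mul_one, trace_sub, trace_add]
  linarith

end MeasureTheory

theorem mse_ls_after_pps_general
    {m d : ℕ} (A : Matrix (Fin m) (Fin d) ℝ) (B : Matrix (Fin d) (Fin m) ℝ)
    (h1 : A * B * A = A)
    (h4 : (B * A)ᵀ = B * A)
    (H : Matrix (Fin d) (Fin d) ℝ) (hH : Hᵀ * H = 1)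
    {Ω : Type*} [MeasureSpace Ω]
    (X : Ω → Fin d → ℝ)
    (hL2 : ∀ i, MemLp (fun ω => X ω i) 2)
    (K₀ : Matrix (Fin d) (Fin d) ℝ)
    (hK₀ : K₀ = Matrix.of fun i j => ∫ ω, X ω i * X ω j) :
    (∫ ω, ∑ i, (X ω i - ((H * (B * A)) *ᵥ X ω) i) ^ 2) =
      Matrix.trace ((1 + B * A) * K₀) - 2 * Matrix.trace (H * (B * A) * K₀) := by
  have hCC : (H * (B * A))ᵀ * (H * (B * A)) = B * A :=
    transpose_mul_self_mul_eq hH h4 (mul_mul_self_eq_of_mul_mul_eq h1)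
  rw [integral_sum_sq_sub_mulVec volume hL2, hCC, hK₀]
  rfl

/-- MSE of the least-squares attack after the privacy-preserving orthonormal transform
`H` (the adversary's estimate being `X̂ = HBAX`):
`E‖X − HBAX‖² = Tr((I + BA)K₀) − 2Tr(HBAK₀)`. -/
theorem mse_ls_after_pps
    {m d : ℕ} (A : Matrix (Fin m) (Fin d) ℝ) (B : Matrix (Fin d) (Fin m) ℝ)
    (h1 : A * B * A = A) (h2 : B * A * B = B)
    (h3 : (A * B)ᵀ = A * B) (h4 : (B * A)ᵀ = B * A)
    (H : Matrix (Fin d) (Fin d) ℝ) (hH : Hᵀ * H = 1)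
    {Ω : Type*} [MeasureSpace Ω] [IsProbabilityMeasure (volume : Measure Ω)]
    (X : Ω → Fin d → ℝ) (hXmeas : Measurable X)
    (hL2 : ∀ i, MemLp (fun ω => X ω i) 2)
    (K₀ : Matrix (Fin d) (Fin d) ℝ)
    (hK₀ : K₀ = Matrix.of fun i j => ∫ ω, X ω i * X ω j) :
    (∫ ω, ∑ i, (X ω i - ((H * (B * A)) *ᵥ X ω) i) ^ 2) =
      Matrix.trace ((1 + B * A) * K₀) - 2 * Matrix.trace (H * (B * A) * K₀) :=
  mse_ls_after_pps_general A B h1 h4 H hH X hL2 K₀ hK₀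
end
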